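/- (Lemma B.4: Lipschitz continuity of the backward solution map.) Let the model data satisfy the Lipschitz assumptions, and let F⃖ : M → V be the map sending μ ∈ M to the unique regular solution of (E1) and (E3) given μ (which exists by Lemma B.2). Then F⃖ is Lipschitz continuous with respect to the supremum norms: for all μ, μ̄ ∈ M, sup_{(t,u)∈TS} ‖F⃖(μ)(t,u) − F⃖(μ̄)(t,u)‖ ≤ (L_Ψ + K1·T) · exp(K2·T) · ( Σ_{i=0}^{n} ( exp(K2·T) · λmax · T )^i ) · sup_{(t,u)∈TS} ‖μ(t,u) − μ̄(t,u)‖. -/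

import Mathlib

open MeasureTheory
open scoped BigOperators Classical

namespace MFGShocks

/-- The probability simplex `𝒫(𝕊)` in `ℝ^S`. -/
def simplex (S : ℕ) : Set (Fin S → ℝ) :=
  {m | (∀ i, 0 ≤ m i) ∧ ∑ i, m i = 1}

/-- Membership in the parameter set `𝕌`: for some `k ≤ n`, the first `k` coordinates are
increasing and lie in `[0,T]` and the remaining coordinates equal `-1`. -/
def memU (n : ℕ) (T : ℝ) (u : Fin n → ℝ) : Prop :=
  ∃ k ≤ n, (∀ i : Fin n, (i : ℕ) < k → u i ∈ Set.Icc (0 : ℝ) T) ∧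
    (∀ i j : Fin n, (j : ℕ) < k → i ≤ j → u i ≤ u j) ∧
    (∀ i : Fin n, k ≤ (i : ℕ) → u i = -1)

/-- `Z(u)`: the number of coordinates of `u` different from `-1`, i.e.\ the number of
shocks recorded in `u`. -/
noncomputable def Zu {n : ℕ} (u : Fin n → ℝ) : ℕ :=
  (Finset.univ.filter fun i => u i ≠ -1).card

/-- Membership `(t,u) ∈ TS`. -/
def memTS (n : ℕ) (T : ℝ) (t : ℝ) (u : Fin n → ℝ) : Prop :=
  memU n T u ∧ t ∈ Set.Icc (0 : ℝ) T ∧ ∀ i, u i ≤ t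

/-- `→(u,t)`: record a new shock at time `t` (replace coordinate `Z(u)+1` of `u` by `t`). -/
noncomputable def push {n : ℕ} (u : Fin n → ℝ) (t : ℝ) : Fin n → ℝ :=
  fun i => if (i : ℕ) = Zu u then t else u i

/-- `←u`: delete the last shock (replace coordinate `Z(u)` of `u` by `-1`). -/
noncomputable def pop {n : ℕ} (u : Fin n → ℝ) : Fin n → ℝ :=
  fun i => if (i : ℕ) + 1 = Zu u then -1 else u i

/-- `t_u = u^{Z(u)}`: the time of the last shock recorded in `u` (`0` if there is none). -/
noncomputable def lastTime {n : ℕ} (u : Fin n → ℝ) : ℝ :=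
  if h : Zu u - 1 < n then u ⟨Zu u - 1, h⟩ else 0

/-- The left endpoint of the time interval associated with the parameter `u`:
`t_u` if `u` records at least one shock, and `0` otherwise. -/
noncomputable def startTime {n : ℕ} (u : Fin n → ℝ) : ℝ :=
  if Zu u = 0 then 0 else lastTime u

/-- `f` is absolutely continuous on the interval `[a,b]`. -/
def AbsContOn {E : Type*} [NormedAddCommGroup E] (f : ℝ → E) (a b : ℝ) : Prop :=
  ∀ ε > (0 : ℝ), ∃ δ > (0 : ℝ), ∀ (N : ℕ) (c d : Fin N → ℝ),
    (∀ k, a ≤ c k ∧ c k ≤ d k ∧ d k ≤ b) →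
    (∀ k l, k ≠ l → Set.Ioo (c k) (d k) ∩ Set.Ioo (c l) (d l) = ∅) →
    ∑ k, (d k - c k) < δ → ∑ k, ‖f (d k) - f (c k)‖ < ε

/-- A function `f : TS → ℝ^S` is regular if `f(·,u)` is absolutely continuous on
`[max_k u^k, T]` (intersected with `[0,T]`) for every `u ∈ 𝕌`. -/
def Regular (S n : ℕ) (T : ℝ) (f : ℝ → (Fin n → ℝ) → Fin S → ℝ) : Prop :=
  ∀ u : Fin n → ℝ, memU n T u → AbsContOn (fun t => f t u) (startTime u) T

/-- The model data: reduced-form running reward `ψ̂`, reduced-form intensity matrix `Q̂`,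
shock intensities `λ`, terminal reward `Ψ`, relocation map `J` (independent of the
distribution) and initial distribution `m₀`. -/
structure Model (S n : ℕ) where
  psi : ℝ → (Fin n → ℝ) → (Fin S → ℝ) → (Fin S → ℝ) → Fin S → ℝ
  Q : ℝ → (Fin n → ℝ) → (Fin S → ℝ) → (Fin S → ℝ) → Fin S → Fin S → ℝ
  lam : ℕ → ℝ → (Fin S → ℝ) → ℝ
  Psi : ℕ → (Fin S → ℝ) → Fin S → ℝ
  J : ℝ → Fin S → Fin S
  m0 : Fin S → ℝ

/-- The standing (boundedness, measurability, intensity-matrix and Lipschitz) assumptions on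
the model data, together with the constants `Ψmax, ψmax, Qmax, λmax, Jmax` bounding the data
and the Lipschitz constants `L_ψ̂, L_Q̂, L_Ψ, L_λ`.  Throughout, `ℝ^S` carries the maximum
norm and the matrix norm is the compatible induced one (maximal absolute row sum). -/
structure Hyps (S n : ℕ) (T : ℝ) (D : Model S n)
    (Lpsi LQ LPsi Llam Psimax psimax Qmax lammax : ℝ) (Jmax : ℕ) : Prop where
  hS : 1 ≤ S
  hn : 1 ≤ n
  hT : 0 < T
  hm0 : D.m0 ∈ simplex S
  hLpsi : 0 < Lpsi
  hLQ : 0 < LQ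
  hLPsi : 0 < LPsi
  hLlam : 0 < Llam
  psi_meas : Measurable fun p : ℝ × (Fin n → ℝ) × (Fin S → ℝ) × (Fin S → ℝ) =>
    D.psi p.1 p.2.1 p.2.2.1 p.2.2.2
  Q_meas : Measurable fun p : ℝ × (Fin n → ℝ) × (Fin S → ℝ) × (Fin S → ℝ) =>
    D.Q p.1 p.2.1 p.2.2.1 p.2.2.2
  lam_meas : ∀ k, Measurable fun p : ℝ × (Fin S → ℝ) => D.lam k p.1 p.2
  Psi_meas : ∀ k, Measurable (D.Psi k)
  J_meas : Measurable D.J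
  psi_bdd : ∀ t u m v, memTS n T t u → m ∈ simplex S → ∀ i, |D.psi t u m v i| ≤ psimax
  Q_bdd : ∀ t u m v, memTS n T t u → m ∈ simplex S → ∀ i, ∑ j, |D.Q t u m v i j| ≤ Qmax
  Q_offdiag : ∀ t u m v i j, i ≠ j → 0 ≤ D.Q t u m v i j
  Q_rowsum : ∀ t u m v i, ∑ j, D.Q t u m v i j = 0
  lam_pos : ∀ k, 1 ≤ k → k ≤ n → ∀ t ∈ Set.Icc (0 : ℝ) T, ∀ m ∈ simplex S,
    0 < D.lam k t m
  lam_bdd : ∀ k, 1 ≤ k → k ≤ n → ∀ t ∈ Set.Icc (0 : ℝ) T, ∀ m ∈ simplex S,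
    D.lam k t m ≤ lammax
  Psi_bdd : ∀ k ≤ n, ∀ m ∈ simplex S, ∀ i, |D.Psi k m i| ≤ Psimax
  psi_lip : ∀ t u, memTS n T t u → ∀ m₁ ∈ simplex S, ∀ m₂ ∈ simplex S,
    ∀ v₁ v₂ : Fin S → ℝ, ∀ i,
      |D.psi t u m₁ v₁ i - D.psi t u m₂ v₂ i| ≤ Lpsi * (‖m₁ - m₂‖ + ‖v₁ - v₂‖)
  Q_lip : ∀ t u, memTS n T t u → ∀ m₁ ∈ simplex S, ∀ m₂ ∈ simplex S,
    ∀ v₁ v₂ : Fin S → ℝ, ∀ i,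
      ∑ j, |D.Q t u m₁ v₁ i j - D.Q t u m₂ v₂ i j| ≤ LQ * (‖m₁ - m₂‖ + ‖v₁ - v₂‖)
  Psi_lip : ∀ k ≤ n, ∀ m₁ ∈ simplex S, ∀ m₂ ∈ simplex S,
    ‖D.Psi k m₁ - D.Psi k m₂‖ ≤ LPsi * ‖m₁ - m₂‖
  lam_lip : ∀ k, 1 ≤ k → k ≤ n → ∀ t ∈ Set.Icc (0 : ℝ) T, ∀ m₁ ∈ simplex S, ∀ m₂ ∈ simplex S,
    |D.lam k t m₁ - D.lam k t m₂| ≤ Llam * ‖m₁ - m₂‖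
  J_bdd : ∀ t ∈ Set.Icc (0 : ℝ) T, ∀ j : Fin S,
    (Finset.univ.filter fun i => D.J t i = j).card ≤ Jmax

/-- The constant `v_max`. -/
noncomputable def vmaxC (n : ℕ) (T Psimax psimax Qmax lammax : ℝ) : ℝ :=
  (Psimax + psimax * T) * Real.exp ((Qmax + lammax) * T) *
    ∑ i ∈ Finset.range (n + 1), (Real.exp ((Qmax + lammax) * T) * lammax * T) ^ i

/-- The constant `K₁ = L_ψ̂ + L_Q̂ v_max + 2 v_max L_λ`. -/
noncomputable def K1C (n : ℕ) (T Lpsi LQ Llam Psimax psimax Qmax lammax : ℝ) : ℝ :=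
  Lpsi + LQ * vmaxC n T Psimax psimax Qmax lammax +
    2 * vmaxC n T Psimax psimax Qmax lammax * Llam

/-- The constant `K₂ = L_ψ̂ + v_max L_Q̂ + Qmax + λmax`. -/
noncomputable def K2C (n : ℕ) (T Lpsi LQ Psimax psimax Qmax lammax : ℝ) : ℝ :=
  Lpsi + vmaxC n T Psimax psimax Qmax lammax * LQ + Qmax + lammax

/-- The right-hand side of the backward equation (E1), written for the integral
(Carathéodory) formulation `v(t,u) = Ψ(Z(u),μ(T,u)) + ∫_t^T (E1rhs)(s) ds`. -/
noncomputable def E1rhs {S n : ℕ} (D : Model S n)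
    (μ v : ℝ → (Fin n → ℝ) → Fin S → ℝ) (u : Fin n → ℝ) (i : Fin S) (s : ℝ) : ℝ :=
  D.psi s u (μ s u) (v s u) i + (∑ j, D.Q s u (μ s u) (v s u) i j * v s u j) +
    (if Zu u < n then
      D.lam (Zu u + 1) s (μ s u) * (v s (push u s) (D.J s i) - v s u i)
    else 0)

/-- `v` is a (Carathéodory) solution of the backward equation (E1) with terminal
condition (E3), given the flow `μ`. -/
def SolBackward (S n : ℕ) (T : ℝ) (D : Model S n)
    (μ v : ℝ → (Fin n → ℝ) → Fin S → ℝ) : Prop :=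
  ∀ u : Fin n → ℝ, memU n T u →
    (∀ i : Fin S, v T u i = D.Psi (Zu u) (μ T u) i) ∧
    ∀ t : ℝ, memTS n T t u → ∀ i : Fin S,
      IntervalIntegrable (E1rhs D μ v u i) volume t T ∧
      v t u i = D.Psi (Zu u) (μ T u) i + ∫ s in t..T, E1rhs D μ v u i s

/-- The right-hand side of the forward equation (E2). -/
noncomputable def E2rhs {S n : ℕ} (D : Model S n)
    (v μ : ℝ → (Fin n → ℝ) → Fin S → ℝ) (u : Fin n → ℝ) (i : Fin S) (s : ℝ) : ℝ :=
  ∑ j, μ s u j * D.Q s u (μ s u) (v s u) j i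

/-- `μ` is a (Carathéodory) solution of the forward equation (E2) with initial
condition (E4) and consistency conditions (E5), given the value function `v`. -/
def SolForward (S n : ℕ) (T : ℝ) (D : Model S n)
    (v μ : ℝ → (Fin n → ℝ) → Fin S → ℝ) : Prop :=
  (∀ i, μ 0 (fun _ => (-1 : ℝ)) i = D.m0 i) ∧
  (∀ u : Fin n → ℝ, memU n T u → 1 ≤ Zu u → ∀ j : Fin S,
    μ (lastTime u) u j =
      ∑ i, if D.J (lastTime u) i = j then μ (lastTime u) (pop u) i else 0) ∧
  (∀ u : Fin n → ℝ, memU n T u → ∀ t : ℝ, memTS n T t u → ∀ i : Fin S,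
    IntervalIntegrable (E2rhs D v μ u i) volume (startTime u) t ∧
    μ t u i = μ (startTime u) u i + ∫ s in (startTime u)..t, E2rhs D v μ u i s)

/-- Membership in `M`: a `𝒫(𝕊)`-valued function on `TS` that is `Qmax`-Lipschitz in time. -/
def MemM (S n : ℕ) (T Qmax : ℝ) (μ : ℝ → (Fin n → ℝ) → Fin S → ℝ) : Prop :=
  (∀ t u, memTS n T t u → μ t u ∈ simplex S) ∧
  ∀ u : Fin n → ℝ, memU n T u → ∀ t₁ t₂ : ℝ, memTS n T t₁ u → memTS n T t₂ u →
    ‖μ t₁ u - μ t₂ u‖ ≤ Qmax * |t₁ - t₂|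

/-- Membership in `V`: a regular function on `TS` bounded by `v_max` in supremum norm. -/
def MemV (S n : ℕ) (T vmaxVal : ℝ) (v : ℝ → (Fin n → ℝ) → Fin S → ℝ) : Prop :=
  Regular S n T v ∧ ∀ t u, memTS n T t u → ‖v t u‖ ≤ vmaxVal

/-- The supremum norm over `TS` of a function `f : TS → ℝ^S`. -/
noncomputable def supTS (S n : ℕ) (T : ℝ) (f : ℝ → (Fin n → ℝ) → Fin S → ℝ) : ℝ :=
  sSup {r : ℝ | ∃ t u, memTS n T t u ∧ r = ‖f t u‖}

end MFGShocks

namespace MFGShocks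

/-!
On a slice `u`, the difference `w = v(·,u) - v̄(·,u)` solves a backward integral equation with
terminal term at most `L_Ψ δ`, `δ = sup ‖μ - μ̄‖`, and integrand at most
`K₁ δ + λmax ‖w(·,→(u,·))‖ + K₂ ‖w‖`; the a priori bound `‖v̄‖ ≤ v_max` controls the terms in
which `v̄` multiplies an increment of the data. Gronwall's inequality turns a bound `B` on the
slices with one more shock into `(L_Ψ + K₁T) e^{K₂T} δ + e^{K₂T} λmax T B` on `u`. Slices with
`Z(u) = n` carry no jump term, so backward induction on `Z(u)` produces the geometric sum. The
same scheme with the bounds on the data instead of their Lipschitz constants gives `v_max`.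
-/

open Set

theorem le_mul_exp_of_le_add_integral {f : ℝ → ℝ} {a b A K : ℝ} (hK : 0 ≤ K)
    (hf : ContinuousOn f (Icc a b))
    (h : ∀ t ∈ Icc a b, f t ≤ A + ∫ s in t..b, K * f s) :
    ∀ t ∈ Icc a b, f t ≤ A * Real.exp (K * (b - t)) := by
  intro t ht
  have hab : a ≤ b := ht.1.trans ht.2
  set F : ℝ → ℝ := fun t => A + ∫ s in t..b, K * f s
  have hKf : ContinuousOn (fun s => K * f s) (Icc a b) := continuousOn_const.mul hf
  -- `F' = -K f ≥ -K F`, so `F e^{Kt}` is nondecreasing.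
  have hmono : MonotoneOn (fun t => F t * Real.exp (K * t)) (Icc a b) := by
    refine monotoneOn_of_hasDerivWithinAt_nonneg
      (f' := fun t => (K * F t - K * f t) * Real.exp (K * t)) (convex_Icc a b) ?_
      (fun s hs => ?_) (fun s hs => ?_)
    · have := intervalIntegral.continuousOn_primitive_interval_left
        (μ := volume) (uIcc_of_le hab ▸ hKf.integrableOn_Icc)
      exact ((uIcc_of_le hab ▸ this).const_add A).mul (by fun_prop)
    · rw [interior_Icc] at hs
      have hF : HasDerivAt F (-(K * f s)) s :=
        (intervalIntegral.integral_hasDerivAt_left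
          ((hKf.mono (Icc_subset_Icc_left hs.1.le)).intervalIntegrable_of_Icc hs.2.le)
          (hKf.mono Ioo_subset_Icc_self |>.stronglyMeasurableAtFilter isOpen_Ioo s hs)
          ((hKf.mono Ioo_subset_Icc_self).continuousAt (isOpen_Ioo.mem_nhds hs))).const_add A
      have hE : HasDerivAt (fun t => Real.exp (K * t)) (Real.exp (K * s) * K) s :=
        ((hasDerivAt_id s).const_mul K).exp.congr_deriv (by simp)
      exact (hF.mul hE).hasDerivWithinAt.congr_deriv (by ring)
    · rw [interior_Icc] at hs
      have : 0 ≤ K * F s - K * f s := by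
        rw [← mul_sub]; exact mul_nonneg hK (sub_nonneg.2 (h s (Ioo_subset_Icc_self hs)))
      positivity
  have hle : F t * Real.exp (K * t) ≤ A * Real.exp (K * b) := by
    simpa [F] using hmono ht (right_mem_Icc.2 hab) ht.2
  calc f t ≤ F t := h t ht
    _ = F t * Real.exp (K * t) * Real.exp (-(K * t)) := by
      rw [mul_assoc, ← Real.exp_add]; simp
    _ ≤ A * Real.exp (K * b) * Real.exp (-(K * t)) := by gcongr
    _ = A * Real.exp (K * (b - t)) := by rw [mul_assoc, ← Real.exp_add]; ring_nf

theorem le_mul_exp_of_le_add_integral_const_add {f : ℝ → ℝ} {a b A c K : ℝ} (hA : 0 ≤ A)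
    (hc : 0 ≤ c) (hK : 0 ≤ K) (hf : ContinuousOn f (Icc a b))
    (h : ∀ t ∈ Icc a b, f t ≤ A + ∫ s in t..b, (c + K * f s)) :
    ∀ t ∈ Icc a b, f t ≤ (A + c * (b - a)) * Real.exp (K * (b - a)) := by
  have hexp := le_mul_exp_of_le_add_integral (A := A + c * (b - a)) hK hf fun t ht => by
    have hKf : IntervalIntegrable (fun s => K * f s) volume t b :=
      ((continuousOn_const.mul hf).mono (Icc_subset_Icc_left ht.1)).intervalIntegrable_of_Icc
        ht.2
    have := h t ht
    rw [intervalIntegral.integral_add intervalIntegrable_const hKf,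
      intervalIntegral.integral_const, smul_eq_mul] at this
    nlinarith [ht.1]
  intro t ht
  refine (hexp t ht).trans (mul_le_mul_of_nonneg_left ?_ ?_)
  · gcongr; linarith [ht.1]
  · nlinarith [ht.1, ht.2]

theorem abs_apply_le_norm {ι : Type*} [Fintype ι] (x : ι → ℝ) (i : ι) : |x i| ≤ ‖x‖ :=
  (Real.norm_eq_abs (x i)).symm.trans_le (norm_le_pi_norm x i)

theorem norm_le_of_eq_add_integral {ι : Type*} [Fintype ι] {w : ℝ → ι → ℝ} {g : ι → ℝ}
    {h : ι → ℝ → ℝ} {a b A c K : ℝ} (hc : 0 ≤ c) (hK : 0 ≤ K)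
    (hw : ContinuousOn w (Icc a b)) (hg : ‖g‖ ≤ A)
    (hw_eq : ∀ t ∈ Icc a b, ∀ i,
      IntervalIntegrable (h i) volume t b ∧ w t i = g i + ∫ s in t..b, h i s)
    (hh : ∀ s ∈ Icc a b, ∀ i, |h i s| ≤ c + K * ‖w s‖) :
    ∀ t ∈ Icc a b, ‖w t‖ ≤ (A + c * (b - a)) * Real.exp (K * (b - a)) := by
  refine le_mul_exp_of_le_add_integral_const_add ((norm_nonneg g).trans hg) hc hK hw.norm
    fun t ht => ?_
  have hI : 0 ≤ ∫ s in t..b, (c + K * ‖w s‖) :=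
    intervalIntegral.integral_nonneg ht.2 fun s _ => by positivity
  refine (pi_norm_le_iff_of_nonneg (by linarith [norm_nonneg g])).2 fun i => ?_
  obtain ⟨hint, heq⟩ := hw_eq t ht i
  rw [Real.norm_eq_abs, heq]
  refine (abs_add_le _ _).trans (add_le_add ((abs_apply_le_norm g i).trans hg) ?_)
  refine (intervalIntegral.abs_integral_le_integral_abs ht.2).trans
    (intervalIntegral.integral_mono_on ht.2 hint.abs ?_ fun s hs => hh s ⟨ht.1.trans hs.1, hs.2⟩ i)
  exact (continuousOn_const.add (continuousOn_const.mul
    (hw.norm.mono (Icc_subset_Icc_left ht.1)))).intervalIntegrable_of_Icc ht.2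

theorem AbsContOn.continuousOn {E : Type*} [NormedAddCommGroup E] {f : ℝ → E} {a b : ℝ}
    (h : AbsContOn f a b) : ContinuousOn f (Icc a b) := by
  refine Metric.continuousOn_iff.2 fun x hx ε hε => ?_
  obtain ⟨δ, hδ, hf⟩ := h ε hε
  have hshort : ∀ c ∈ Icc a b, ∀ d ∈ Icc a b, c ≤ d → d - c < δ → ‖f d - f c‖ < ε :=
    fun c hc d hd hcd hlt => by
      simpa using hf 1 (fun _ => c) (fun _ => d) (fun _ => ⟨hc.1, hcd, hd.2⟩)
        (fun k l hkl => absurd (Subsingleton.elim k l) hkl) (by simpa using hlt)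
  refine ⟨δ, hδ, fun y hy hxy => ?_⟩
  rw [Real.dist_eq, abs_lt] at hxy
  rw [dist_eq_norm]
  rcases le_total x y with hle | hle
  · exact hshort x hx y hy hle (by linarith)
  · rw [norm_sub_rev]; exact hshort y hy x hx hle (by linarith)

theorem abs_sum_mul_le {ι : Type*} [Fintype ι] (q x : ι → ℝ) :
    |∑ j, q j * x j| ≤ (∑ j, |q j|) * ‖x‖ := by
  rw [Finset.sum_mul]
  refine (Finset.abs_sum_le_sum_abs _ _).trans (Finset.sum_le_sum fun j _ => ?_)
  rw [abs_mul]
  exact mul_le_mul_of_nonneg_left (abs_apply_le_norm x j) (abs_nonneg _)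

theorem abs_sum_mul_sub_sum_mul_le {ι : Type*} [Fintype ι] (q q' x x' : ι → ℝ) :
    |∑ j, q j * x j - ∑ j, q' j * x' j| ≤
      (∑ j, |q j|) * ‖x - x'‖ + (∑ j, |q j - q' j|) * ‖x'‖ := by
  have hsplit : ∑ j, q j * x j - ∑ j, q' j * x' j =
      ∑ j, q j * (x - x') j + ∑ j, (q j - q' j) * x' j := by
    rw [← Finset.sum_sub_distrib, ← Finset.sum_add_distrib]
    exact Finset.sum_congr rfl fun j _ => by simp only [Pi.sub_apply]; ring
  rw [hsplit]
  exact (abs_add_le _ _).trans (add_le_add (abs_sum_mul_le _ _) (abs_sum_mul_le _ _))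

theorem abs_mul_sub_sub_mul_sub_le (l l' p p' w w' : ℝ) :
    |l * (p - w) - l' * (p' - w')| ≤
      |l| * (|p - p'| + |w - w'|) + |l - l'| * (|p'| + |w'|) := by
  have hsplit : l * (p - w) - l' * (p' - w') =
      l * ((p - p') - (w - w')) + (l - l') * (p' - w') := by
    ring
  rw [hsplit]
  refine (abs_add_le _ _).trans (add_le_add ?_ ?_) <;> rw [abs_mul] <;> gcongr <;> exact abs_sub _ _

theorem Zu_le {n : ℕ} (u : Fin n → ℝ) : Zu u ≤ n :=
  (Finset.card_filter_le _ _).trans (by simp)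

theorem Zu_eq {n k : ℕ} {u : Fin n → ℝ} (hk : k ≤ n) (hlt : ∀ i : Fin n, (i : ℕ) < k → u i ≠ -1)
    (hge : ∀ i : Fin n, k ≤ (i : ℕ) → u i = -1) : Zu u = k := by
  have hfilter : (Finset.univ.filter fun i => u i ≠ -1) =
      Finset.univ.filter fun i : Fin n => (i : ℕ) < k := by
    ext i
    simp only [Finset.mem_filter, Finset.mem_univ, true_and]
    exact ⟨fun hne => by_contra fun hle => hne (hge i (not_lt.1 hle)), hlt i⟩
  rw [Zu, hfilter, Fin.card_filter_val_lt, min_eq_right hk]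

theorem memU_Zu {n : ℕ} {T : ℝ} {u : Fin n → ℝ} (h : memU n T u) :
    (∀ i : Fin n, (i : ℕ) < Zu u → u i ∈ Icc (0 : ℝ) T) ∧
    (∀ i j : Fin n, (j : ℕ) < Zu u → i ≤ j → u i ≤ u j) ∧
    (∀ i : Fin n, Zu u ≤ (i : ℕ) → u i = -1) := by
  obtain ⟨k, hk, hmem, hmono, hneg⟩ := h
  obtain rfl : Zu u = k := Zu_eq hk (fun i hi he => by linarith [(hmem i hi).1]) hneg
  exact ⟨hmem, hmono, hneg⟩

theorem startTime_mem {n : ℕ} {T : ℝ} {u : Fin n → ℝ} (hT : 0 ≤ T) (h : memU n T u) :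
    startTime u ∈ Icc (0 : ℝ) T ∧ ∀ i, u i ≤ startTime u := by
  obtain ⟨hmem, hmono, hneg⟩ := memU_Zu h
  unfold startTime lastTime
  split_ifs with hz hlt
  · exact ⟨⟨le_rfl, hT⟩, fun i => by rw [hneg i (by omega)]; norm_num⟩
  · have hlast := hmem ⟨Zu u - 1, hlt⟩ (by simp only; omega)
    refine ⟨hlast, fun i => ?_⟩
    by_cases hi : (i : ℕ) < Zu u
    · exact hmono _ _ (by simp only; omega) (Fin.le_def.2 (by simp only; omega))
    · rw [hneg i (by omega)]; linarith [hlast.1]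
  · exact absurd (Zu_le u) (by omega)

theorem memTS_iff {n : ℕ} {T t : ℝ} {u : Fin n → ℝ} (hT : 0 ≤ T) (h : memU n T u) :
    memTS n T t u ↔ t ∈ Icc (startTime u) T := by
  obtain ⟨hst, hle⟩ := startTime_mem hT h
  refine ⟨fun ⟨_, ht, hut⟩ => ⟨?_, ht.2⟩,
    fun ht => ⟨h, ⟨hst.1.trans ht.1, ht.2⟩, fun i => (hle i).trans ht.1⟩⟩
  unfold startTime lastTime
  split_ifs
  exacts [ht.1, hut _, ht.1]

theorem memTS_zero {n : ℕ} {T : ℝ} (hT : 0 ≤ T) : memTS n T 0 (fun _ => (-1 : ℝ)) :=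
  ⟨⟨0, Nat.zero_le n, fun _ hi => absurd hi (Nat.not_lt_zero _),
    fun _ _ hj => absurd hj (Nat.not_lt_zero _), fun _ _ => rfl⟩,
    ⟨le_rfl, hT⟩, fun _ => by norm_num⟩

theorem memTS_push {n : ℕ} {T s : ℝ} {u : Fin n → ℝ} (h : memTS n T s u) (hZ : Zu u < n) :
    memTS n T s (push u s) ∧ Zu (push u s) = Zu u + 1 := by
  obtain ⟨hU, hs, hus⟩ := h
  obtain ⟨hmem, hmono, hneg⟩ := memU_Zu hU
  have hpmem : ∀ i : Fin n, (i : ℕ) < Zu u + 1 → push u s i ∈ Icc (0 : ℝ) T := fun i hi => by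
    unfold push; split_ifs
    exacts [hs, hmem i (by omega)]
  have hpneg : ∀ i : Fin n, Zu u + 1 ≤ (i : ℕ) → push u s i = -1 := fun i hi => by
    unfold push; rw [if_neg (by omega)]; exact hneg i (by omega)
  have hple : ∀ i, push u s i ≤ s := fun i => by
    unfold push; split_ifs
    exacts [le_rfl, hus i]
  have hpmono : ∀ i j : Fin n, (j : ℕ) < Zu u + 1 → i ≤ j → push u s i ≤ push u s j := by
    intro i j hj hij
    by_cases hje : (j : ℕ) = Zu u
    · simpa only [push, if_pos hje] using hple i
    · have hie : (i : ℕ) ≠ Zu u := by rw [Fin.le_def] at hij; omega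
      simp only [push, if_neg hje, if_neg hie]
      exact hmono i j (by omega) hij
  exact ⟨⟨⟨Zu u + 1, hZ, hpmem, hpmono, hpneg⟩, hs, hple⟩,
    Zu_eq hZ (fun i hi he => by linarith [(hpmem i hi).1]) hpneg⟩

theorem le_geom_sum_of_push_bound {n : ℕ} {T α β : ℝ} (hα : 0 ≤ α) (hβ : 0 ≤ β)
    {φ : ℝ → (Fin n → ℝ) → ℝ}
    (hstep : ∀ u B, memU n T u → 0 ≤ B → (Zu u < n → ∀ s, memTS n T s u → φ s (push u s) ≤ B) →
      ∀ t, memTS n T t u → φ t u ≤ α + β * B) :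
    ∀ t u, memTS n T t u → φ t u ≤ α * ∑ i ∈ Finset.range (n + 1), β ^ i := by
  have key : ∀ j t u, memTS n T t u → n ≤ Zu u + j →
      φ t u ≤ α * ∑ i ∈ Finset.range (j + 1), β ^ i := by
    intro j
    induction j with
    | zero =>
      intro t u ht hZ
      simpa using hstep u 0 ht.1 le_rfl (fun hlt => absurd hlt (by omega)) t ht
    | succ j ih =>
      intro t u ht hZ
      refine (hstep u (α * ∑ i ∈ Finset.range (j + 1), β ^ i) ht.1 (by positivity)
        (fun hlt s hs => ?_) t ht).trans_eq ?_
      · obtain ⟨hs', hZ'⟩ := memTS_push hs hlt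
        exact ih s _ hs' (by omega)
      · rw [geom_sum_succ (n := j + 1)]; ring
  exact fun t u ht => key n t u ht (by omega)

theorem le_supTS {S n : ℕ} {T : ℝ} {f : ℝ → (Fin n → ℝ) → Fin S → ℝ} {C : ℝ}
    (hC : ∀ t u, memTS n T t u → ‖f t u‖ ≤ C) {t : ℝ} {u : Fin n → ℝ}
    (h : memTS n T t u) : ‖f t u‖ ≤ supTS S n T f :=
  le_csSup ⟨C, by rintro r ⟨t', u', hm, rfl⟩; exact hC t' u' hm⟩ ⟨t, u, h, rfl⟩

theorem supTS_le {S n : ℕ} {T : ℝ} {f : ℝ → (Fin n → ℝ) → Fin S → ℝ} {C : ℝ}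
    (hC0 : 0 ≤ C) (hC : ∀ t u, memTS n T t u → ‖f t u‖ ≤ C) : supTS S n T f ≤ C :=
  Real.sSup_le (by rintro r ⟨t', u', hm, rfl⟩; exact hC t' u' hm) hC0

theorem supTS_nonneg {S n : ℕ} {T : ℝ} {f : ℝ → (Fin n → ℝ) → Fin S → ℝ} {C : ℝ}
    (hT : 0 ≤ T) (hC : ∀ t u, memTS n T t u → ‖f t u‖ ≤ C) : 0 ≤ supTS S n T f :=
  (norm_nonneg _).trans (le_supTS hC (memTS_zero hT))

theorem norm_le_one_of_mem_simplex {S : ℕ} {m : Fin S → ℝ} (hm : m ∈ simplex S) : ‖m‖ ≤ 1 :=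
  (pi_norm_le_iff_of_nonneg zero_le_one).2 fun i => by
    rw [Real.norm_eq_abs, abs_of_nonneg (hm.1 i), ← hm.2]
    exact Finset.single_le_sum (fun j _ => hm.1 j) (Finset.mem_univ i)

theorem norm_sub_le_two_of_mem_simplex {S : ℕ} {m m' : Fin S → ℝ} (hm : m ∈ simplex S)
    (hm' : m' ∈ simplex S) : ‖m - m'‖ ≤ 2 :=
  (norm_sub_le m m').trans <| by
    linarith [norm_le_one_of_mem_simplex hm, norm_le_one_of_mem_simplex hm']

section Model

variable {S n : ℕ} {T : ℝ} {D : Model S n}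
  {Lpsi LQ LPsi Llam Psimax psimax Qmax lammax : ℝ} {Jmax : ℕ}

theorem Hyps.bounds_nonneg (H : Hyps S n T D Lpsi LQ LPsi Llam Psimax psimax Qmax lammax Jmax) :
    0 ≤ Psimax ∧ 0 ≤ psimax ∧ 0 ≤ Qmax ∧ 0 ≤ lammax := by
  have i : Fin S := ⟨0, H.hS⟩
  have h0 : memTS n T 0 (fun _ => (-1 : ℝ)) := memTS_zero H.hT.le
  have hT0 : (0 : ℝ) ∈ Icc 0 T := ⟨le_rfl, H.hT.le⟩
  exact ⟨(abs_nonneg _).trans (H.Psi_bdd 0 (Nat.zero_le n) D.m0 H.hm0 i),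
    (abs_nonneg _).trans (H.psi_bdd 0 _ D.m0 0 h0 H.hm0 i),
    (Finset.sum_nonneg fun j _ => abs_nonneg _).trans (H.Q_bdd 0 _ D.m0 0 h0 H.hm0 i),
    (H.lam_pos 1 le_rfl H.hn 0 hT0 D.m0 H.hm0).le.trans (H.lam_bdd 1 le_rfl H.hn 0 hT0 D.m0 H.hm0)⟩

theorem Hyps.abs_lam_le (H : Hyps S n T D Lpsi LQ LPsi Llam Psimax psimax Qmax lammax Jmax)
    {k : ℕ} (hk1 : 1 ≤ k) (hkn : k ≤ n) {t : ℝ} (ht : t ∈ Icc (0 : ℝ) T) {m : Fin S → ℝ}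
    (hm : m ∈ simplex S) : |D.lam k t m| ≤ lammax := by
  rw [abs_of_pos (H.lam_pos k hk1 hkn t ht m hm)]
  exact H.lam_bdd k hk1 hkn t ht m hm

theorem Hyps.vmaxC_nonneg (H : Hyps S n T D Lpsi LQ LPsi Llam Psimax psimax Qmax lammax Jmax) :
    0 ≤ vmaxC n T Psimax psimax Qmax lammax := by
  obtain ⟨hΨ, hψ, -, hlam⟩ := H.bounds_nonneg
  have hT := H.hT.le
  unfold vmaxC
  positivity

theorem Hyps.K1C_nonneg (H : Hyps S n T D Lpsi LQ LPsi Llam Psimax psimax Qmax lammax Jmax) :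
    0 ≤ K1C n T Lpsi LQ Llam Psimax psimax Qmax lammax := by
  have := H.vmaxC_nonneg; have := H.hLpsi; have := H.hLQ; have := H.hLlam
  unfold K1C
  positivity

theorem Hyps.K2C_nonneg (H : Hyps S n T D Lpsi LQ LPsi Llam Psimax psimax Qmax lammax Jmax) :
    0 ≤ K2C n T Lpsi LQ Psimax psimax Qmax lammax := by
  obtain ⟨-, -, hQ, hlam⟩ := H.bounds_nonneg
  have := H.vmaxC_nonneg; have := H.hLpsi; have := H.hLQ
  unfold K2C
  positivity

theorem abs_E1rhs_le (H : Hyps S n T D Lpsi LQ LPsi Llam Psimax psimax Qmax lammax Jmax)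
    {μ v : ℝ → (Fin n → ℝ) → Fin S → ℝ} (hμ : ∀ t u, memTS n T t u → μ t u ∈ simplex S)
    {u : Fin n → ℝ} {s B : ℝ} (hs : memTS n T s u) (hB : 0 ≤ B)
    (hpush : Zu u < n → ‖v s (push u s)‖ ≤ B) (i : Fin S) :
    |E1rhs D μ v u i s| ≤ (psimax + lammax * B) + (Qmax + lammax) * ‖v s u‖ := by
  have hlam := H.bounds_nonneg.2.2.2
  have hm := hμ s u hs
  have hjump : |if Zu u < n then
      D.lam (Zu u + 1) s (μ s u) * (v s (push u s) (D.J s i) - v s u i) else 0| ≤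
      lammax * (B + ‖v s u‖) := by
    split_ifs with hlt
    · rw [abs_mul]
      exact mul_le_mul (H.abs_lam_le (by omega) hlt hs.2.1 hm)
        ((abs_sub _ _).trans (add_le_add ((abs_apply_le_norm _ _).trans (hpush hlt))
          (abs_apply_le_norm _ _))) (abs_nonneg _) hlam
    · simpa using mul_nonneg hlam (add_nonneg hB (norm_nonneg _))
  calc |E1rhs D μ v u i s| ≤ psimax + Qmax * ‖v s u‖ + lammax * (B + ‖v s u‖) :=
        (abs_add_three _ _ _).trans (add_le_add_three (H.psi_bdd s u _ _ hs hm i)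
          ((abs_sum_mul_le _ _).trans (mul_le_mul_of_nonneg_right (H.Q_bdd s u _ _ hs hm i)
            (norm_nonneg _))) hjump)
    _ = _ := by ring

theorem abs_E1rhs_sub_le (H : Hyps S n T D Lpsi LQ LPsi Llam Psimax psimax Qmax lammax Jmax)
    {μ μ' v v' : ℝ → (Fin n → ℝ) → Fin S → ℝ} (hμ : ∀ t u, memTS n T t u → μ t u ∈ simplex S)
    (hμ' : ∀ t u, memTS n T t u → μ' t u ∈ simplex S)
    (hv' : ∀ t u, memTS n T t u → ‖v' t u‖ ≤ vmaxC n T Psimax psimax Qmax lammax)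
    {u : Fin n → ℝ} {s δ B : ℝ} (hs : memTS n T s u) (hδ : ‖μ s u - μ' s u‖ ≤ δ) (hB : 0 ≤ B)
    (hpush : Zu u < n → ‖v s (push u s) - v' s (push u s)‖ ≤ B) (i : Fin S) :
    |E1rhs D μ v u i s - E1rhs D μ' v' u i s| ≤
      (K1C n T Lpsi LQ Llam Psimax psimax Qmax lammax * δ + lammax * B) +
        K2C n T Lpsi LQ Psimax psimax Qmax lammax * ‖v s u - v' s u‖ := by
  set VM := vmaxC n T Psimax psimax Qmax lammax
  set dv := ‖v s u - v' s u‖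
  have hlam := H.bounds_nonneg.2.2.2
  have hm := hμ s u hs
  have hm' := hμ' s u hs
  have hδ0 : 0 ≤ δ := (norm_nonneg _).trans hδ
  have hVM : 0 ≤ VM := (norm_nonneg _).trans (hv' s u hs)
  have hlip : ‖μ s u - μ' s u‖ + ‖v s u - v' s u‖ ≤ δ + dv := by linarith
  have hψ : |D.psi s u (μ s u) (v s u) i - D.psi s u (μ' s u) (v' s u) i| ≤ Lpsi * (δ + dv) :=
    (H.psi_lip s u hs _ hm _ hm' _ _ i).trans (by gcongr; exact H.hLpsi.le)
  have hQ : |∑ j, D.Q s u (μ s u) (v s u) i j * v s u j -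
      ∑ j, D.Q s u (μ' s u) (v' s u) i j * v' s u j| ≤ Qmax * dv + LQ * (δ + dv) * VM :=
    (abs_sum_mul_sub_sum_mul_le _ _ _ _).trans (add_le_add
      (mul_le_mul_of_nonneg_right (H.Q_bdd s u _ _ hs hm i) (norm_nonneg _))
      (mul_le_mul ((H.Q_lip s u hs _ hm _ hm' _ _ i).trans (by gcongr; exact H.hLQ.le))
        (hv' s u hs) (norm_nonneg _) (by have := H.hLQ; positivity)))
  have hjump : |(if Zu u < n then
        D.lam (Zu u + 1) s (μ s u) * (v s (push u s) (D.J s i) - v s u i) else 0) -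
      (if Zu u < n then
        D.lam (Zu u + 1) s (μ' s u) * (v' s (push u s) (D.J s i) - v' s u i) else 0)| ≤
      lammax * (B + dv) + Llam * δ * (VM + VM) := by
    split_ifs with hlt
    · have hpush' := (memTS_push hs hlt).1
      refine (abs_mul_sub_sub_mul_sub_le _ _ _ _ _ _).trans (add_le_add
        (mul_le_mul (H.abs_lam_le (by omega) hlt hs.2.1 hm) ?_ (by positivity) hlam)
        (mul_le_mul ?_ ?_ (by positivity) (by have := H.hLlam; positivity)))
      · exact add_le_add ((abs_apply_le_norm (v s (push u s) - v' s (push u s)) _).trans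
          (hpush hlt)) (abs_apply_le_norm (v s u - v' s u) i)
      · exact (H.lam_lip _ (by omega) hlt s hs.2.1 _ hm _ hm').trans
          (mul_le_mul_of_nonneg_left hδ H.hLlam.le)
      · exact add_le_add ((abs_apply_le_norm _ _).trans (hv' s _ hpush'))
          ((abs_apply_le_norm _ _).trans (hv' s u hs))
    · simp only [sub_zero, abs_zero]
      have := H.hLlam
      positivity
  calc |E1rhs D μ v u i s - E1rhs D μ' v' u i s|
      ≤ Lpsi * (δ + dv) + (Qmax * dv + LQ * (δ + dv) * VM) +
          (lammax * (B + dv) + Llam * δ * (VM + VM)) := by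
        refine le_trans (le_of_eq ?_) ((abs_add_three _ _ _).trans (add_le_add_three hψ hQ hjump))
        congr 1
        unfold E1rhs
        ring
    _ = _ := by unfold K1C K2C; ring

theorem norm_le_of_push_bound (H : Hyps S n T D Lpsi LQ LPsi Llam Psimax psimax Qmax lammax Jmax)
    {μ v : ℝ → (Fin n → ℝ) → Fin S → ℝ} (hμ : ∀ t u, memTS n T t u → μ t u ∈ simplex S)
    (hvreg : Regular S n T v) (hv : SolBackward S n T D μ v) {u : Fin n → ℝ} (hU : memU n T u)
    {B : ℝ} (hB : 0 ≤ B) (hpush : Zu u < n → ∀ s, memTS n T s u → ‖v s (push u s)‖ ≤ B)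
    {t : ℝ} (ht : memTS n T t u) :
    ‖v t u‖ ≤ (Psimax + (psimax + lammax * B) * T) * Real.exp ((Qmax + lammax) * T) := by
  obtain ⟨hΨ, hψ, hQ, hlam⟩ := H.bounds_nonneg
  have hT := H.hT.le
  have hIcc : ∀ s, memTS n T s u ↔ s ∈ Icc (startTime u) T := fun s => memTS_iff hT hU
  have hTu := (hIcc T).2 ⟨(startTime_mem hT hU).1.2, le_rfl⟩
  have hΨu : ‖D.Psi (Zu u) (μ T u)‖ ≤ Psimax :=
    (pi_norm_le_iff_of_nonneg hΨ).2 fun i => (H.Psi_bdd _ (Zu_le u) _ (hμ T u hTu) i)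
  refine (norm_le_of_eq_add_integral (w := fun t => v t u) (by positivity) (by positivity)
    (hvreg u hU).continuousOn hΨu (fun s hs i => (hv u hU).2 s ((hIcc s).2 hs) i)
    (fun s hs i => abs_E1rhs_le H hμ ((hIcc s).2 hs) hB (hpush · s ((hIcc s).2 hs)) i)
    t ((hIcc t).1 ht)).trans ?_
  have := (startTime_mem hT hU).1.1
  gcongr <;> linarith

theorem norm_le_vmaxC (H : Hyps S n T D Lpsi LQ LPsi Llam Psimax psimax Qmax lammax Jmax)
    {μ v : ℝ → (Fin n → ℝ) → Fin S → ℝ} (hμ : ∀ t u, memTS n T t u → μ t u ∈ simplex S)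
    (hvreg : Regular S n T v) (hv : SolBackward S n T D μ v) :
    ∀ t u, memTS n T t u → ‖v t u‖ ≤ vmaxC n T Psimax psimax Qmax lammax := by
  obtain ⟨hΨ, hψ, hQ, hlam⟩ := H.bounds_nonneg
  have hT := H.hT.le
  exact le_geom_sum_of_push_bound (by positivity) (by positivity) fun u B hU hB hpush t ht =>
    (norm_le_of_push_bound H hμ hvreg hv hU hB hpush ht).trans_eq (by ring)

theorem norm_sub_le_of_push_bound
    (H : Hyps S n T D Lpsi LQ LPsi Llam Psimax psimax Qmax lammax Jmax)
    {μ μ' v v' : ℝ → (Fin n → ℝ) → Fin S → ℝ} (hμ : ∀ t u, memTS n T t u → μ t u ∈ simplex S)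
    (hμ' : ∀ t u, memTS n T t u → μ' t u ∈ simplex S)
    (hvreg : Regular S n T v) (hv : SolBackward S n T D μ v)
    (hv'reg : Regular S n T v') (hv' : SolBackward S n T D μ' v')
    {δ : ℝ} (hδ : ∀ t u, memTS n T t u → ‖μ t u - μ' t u‖ ≤ δ)
    {u : Fin n → ℝ} (hU : memU n T u) {B : ℝ} (hB : 0 ≤ B)
    (hpush : Zu u < n → ∀ s, memTS n T s u → ‖v s (push u s) - v' s (push u s)‖ ≤ B)
    {t : ℝ} (ht : memTS n T t u) :
    ‖v t u - v' t u‖ ≤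
      (LPsi * δ + (K1C n T Lpsi LQ Llam Psimax psimax Qmax lammax * δ + lammax * B) * T) *
        Real.exp (K2C n T Lpsi LQ Psimax psimax Qmax lammax * T) := by
  obtain ⟨-, -, -, hlam⟩ := H.bounds_nonneg
  have hT := H.hT.le
  have hK1 := H.K1C_nonneg
  have hK2 := H.K2C_nonneg
  have hIcc : ∀ s, memTS n T s u ↔ s ∈ Icc (startTime u) T := fun s => memTS_iff hT hU
  have hTu := (hIcc T).2 ⟨(startTime_mem hT hU).1.2, le_rfl⟩
  have hδ0 : 0 ≤ δ := (norm_nonneg _).trans (hδ T u hTu)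
  have hΨu : ‖D.Psi (Zu u) (μ T u) - D.Psi (Zu u) (μ' T u)‖ ≤ LPsi * δ :=
    (H.Psi_lip _ (Zu_le u) _ (hμ T u hTu) _ (hμ' T u hTu)).trans
      (mul_le_mul_of_nonneg_left (hδ T u hTu) H.hLPsi.le)
  have hsol : ∀ s ∈ Icc (startTime u) T, ∀ i,
      IntervalIntegrable (fun r => E1rhs D μ v u i r - E1rhs D μ' v' u i r) volume s T ∧
      (v s u - v' s u) i = (D.Psi (Zu u) (μ T u) - D.Psi (Zu u) (μ' T u)) i +
        ∫ r in s..T, (E1rhs D μ v u i r - E1rhs D μ' v' u i r) := fun s hs i => by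
    obtain ⟨hint, heq⟩ := (hv u hU).2 s ((hIcc s).2 hs) i
    obtain ⟨hint', heq'⟩ := (hv' u hU).2 s ((hIcc s).2 hs) i
    refine ⟨hint.sub hint', ?_⟩
    simp only [Pi.sub_apply]
    rw [intervalIntegral.integral_sub hint hint', heq, heq']
    ring
  refine (norm_le_of_eq_add_integral (w := fun t => v t u - v' t u) (by positivity) hK2
    ((hvreg u hU).continuousOn.sub (hv'reg u hU).continuousOn) hΨu
    hsol (fun s hs i => abs_E1rhs_sub_le H hμ hμ' (norm_le_vmaxC H hμ' hv'reg hv')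
      ((hIcc s).2 hs) (hδ s u ((hIcc s).2 hs)) hB (hpush · s ((hIcc s).2 hs)) i)
    t ((hIcc t).1 ht)).trans ?_
  have := (startTime_mem hT hU).1.1
  have := H.hLPsi
  gcongr <;> linarith

end Model

/-- **Lemma B.4** (Lipschitz continuity of the backward solution map `F⃖ : M → V`).
If `μ, μ̄ ∈ M` and `v, v̄` are the (unique) regular solutions of (E1), (E3) given `μ`
and `μ̄` respectively, then
`sup_{TS} ‖v − v̄‖ ≤ (L_Ψ + K₁T) e^{K₂T} (Σ_{i=0}^{n} (e^{K₂T} λmax T)^i) sup_{TS} ‖μ − μ̄‖`. -/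
theorem backward_solution_map_lipschitz (S n : ℕ) (T : ℝ) (D : Model S n)
    (Lpsi LQ LPsi Llam Psimax psimax Qmax lammax : ℝ) (Jmax : ℕ)
    (H : Hyps S n T D Lpsi LQ LPsi Llam Psimax psimax Qmax lammax Jmax)
    (μ μ' : ℝ → (Fin n → ℝ) → Fin S → ℝ)
    (hμ : MemM S n T Qmax μ) (hμ' : MemM S n T Qmax μ')
    (v v' : ℝ → (Fin n → ℝ) → Fin S → ℝ)
    (hvreg : Regular S n T v) (hv : SolBackward S n T D μ v)
    (hv'reg : Regular S n T v') (hv' : SolBackward S n T D μ' v') :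
    supTS S n T (fun t u => v t u - v' t u) ≤
      (LPsi + K1C n T Lpsi LQ Llam Psimax psimax Qmax lammax * T) *
        Real.exp (K2C n T Lpsi LQ Psimax psimax Qmax lammax * T) *
        (∑ i ∈ Finset.range (n + 1),
          (Real.exp (K2C n T Lpsi LQ Psimax psimax Qmax lammax * T) * lammax * T) ^ i) *
        supTS S n T (fun t u => μ t u - μ' t u) := by
  have hlam := H.bounds_nonneg.2.2.2
  have hT := H.hT.le
  have hK1 := H.K1C_nonneg
  have := H.hLPsi
  set δ := supTS S n T (fun t u => μ t u - μ' t u)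
  have hμμ' : ∀ t u, memTS n T t u → ‖μ t u - μ' t u‖ ≤ 2 := fun t u h =>
    norm_sub_le_two_of_mem_simplex (hμ.1 t u h) (hμ'.1 t u h)
  have hδ0 : 0 ≤ δ := supTS_nonneg hT hμμ'
  have hvv' := le_geom_sum_of_push_bound (φ := fun t u => ‖v t u - v' t u‖)
    (α := (LPsi + K1C n T Lpsi LQ Llam Psimax psimax Qmax lammax * T) *
      Real.exp (K2C n T Lpsi LQ Psimax psimax Qmax lammax * T) * δ)
    (β := Real.exp (K2C n T Lpsi LQ Psimax psimax Qmax lammax * T) * lammax * T)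
    (by positivity) (by positivity) fun u B hU hB hpush t ht =>
      (norm_sub_le_of_push_bound H hμ.1 hμ'.1 hvreg hv hv'reg hv'
        (fun t u h => le_supTS hμμ' h) hU hB hpush ht).trans_eq (by ring)
  exact (supTS_le (by positivity) hvv').trans_eq (by ring)

end MFGShocks
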